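/- arXiv:2501.15952 — 2 statements merged into one kernel-verified Lean document; each statement's English description precedes it below -/
import Mathlib

section
/- Let G be a graph, k∈ℕ, and S⊆V(G) a set such that for every 5-vertex set P inducing a prison in G and every A⊆E(G) with |A|≤k, if deleting the edges of A from G[S] yields a prison-free graph then A contains an edge of G[P]. Let e∈E(G) be an edge not having both endpoints in S and not contained in any strict supergraph of a prison in G. Then (G,k) is a yes-instance of Prison-Free Edge Deletion if and only if (G−e,k) is a yes-instance of Prison-Free Edge Deletion. -/
/-!
If `H ≤ G` induces a prison on five vertices, then either `G` induces the same prison there,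
or `G` contains one of its two missing edges and the five vertices span a strict supergraph of
a prison in `G`. As `uv` lies in no strict supergraph of a prison, every prison of a subgraph
of `G` on five vertices containing `u` and `v` is a prison of `G`; on five vertices missing
`u` or `v`, deleting `uv` changes nothing.

Hence if `A` solves `(G, k)`, then `A \ {uv}` solves `(G - uv, k)`: a prison of
`G - A - uv` would be a prison of `G` and so, sandwiched, of `G - A`. Conversely, if `A`
solves `(G - uv, k)`, then a prison `P` of `G - A` must contain `u` and `v` and is thus a prison
of `G`; as `G[S] - A` is prison-free (`uv` is not inside `S`), the modulator property puts an
edge of `G[P]` into `A`, although all these edges survive in `G - A`.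
-/

namespace PrisonFreePaper

variable {V : Type*}

/-- The prison graph on 5 vertices: `K₅` minus the two edges `{4,2}` and `{4,3}`
(which share the vertex `4`).  Thus `{0,1,2,3}` is a 4-clique and the vertex `4`
is adjacent exactly to `0` and `1`. -/
def prison : SimpleGraph (Fin 5) where
  Adj a b := a ≠ b ∧ ¬((a = 4 ∧ (b = 2 ∨ b = 3)) ∨ (b = 4 ∧ (a = 2 ∨ a = 3)))
  symm := by
    constructor
    rintro a b ⟨h1, h2⟩
    exact ⟨h1.symm, by tauto⟩
  loopless := by
    constructor
    rintro a ⟨h, _⟩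
    exact h rfl

/-- `P` is a 5-vertex set inducing a subgraph of `G` isomorphic to the prison. -/
def InducesPrison (G : SimpleGraph V) (P : Set V) : Prop :=
  ∃ f : Fin 5 ↪ V, Set.range f = P ∧ ∀ a b, G.Adj (f a) (f b) ↔ prison.Adj a b

/-- `G` is prison-free: no 5-vertex set induces a prison. -/
def PrisonFree (G : SimpleGraph V) : Prop :=
  ¬ ∃ P : Set V, InducesPrison G P

/-- `P` is the set of classes witnessing that the induced subgraph `G[F]` is
complete multipartite: the classes are nonempty, pairwise disjoint, their union
is `F`, and two vertices of `F` are adjacent iff they lie in different classes. -/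
def IsCMP (G : SimpleGraph V) (F : Set V) (P : Set (Set V)) : Prop :=
  (∀ C ∈ P, C.Nonempty ∧ C ⊆ F) ∧
  (⋃₀ P = F) ∧
  (∀ C ∈ P, ∀ D ∈ P, C ≠ D → Disjoint C D) ∧
  (∀ u ∈ F, ∀ v ∈ F, (G.Adj u v ↔ ¬ ∃ C ∈ P, u ∈ C ∧ v ∈ C))

/-- The induced subgraph `G[F]` is complete multipartite. -/
def CMP (G : SimpleGraph V) (F : Set V) : Prop := ∃ P, IsCMP G F P

/-- The induced subgraph `G[F]` is complete multipartite with at least `p` classes. -/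
def CMPAtLeast (G : SimpleGraph V) (F : Set V) (p : ℕ) : Prop :=
  ∃ P, IsCMP G F P ∧ ∃ f : Fin p ↪ Set V, ∀ i, f i ∈ P

/-- `F ∈ cmd_p` of the induced subgraph of `G` on the ground set `W`:
`F` is an inclusion-wise maximal subset of `W` inducing a complete multipartite
graph with at least `p` classes. -/
def Cmd (G : SimpleGraph V) (W : Set V) (p : ℕ) (F : Set V) : Prop :=
  F ⊆ W ∧ CMPAtLeast G F p ∧
    ∀ F', F' ⊆ W → F ⊆ F' → CMPAtLeast G F' p → F' = F

/-- The neighbourhood of `v` in `G` intersects at most one class of `P`. -/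
def MeetsAtMostOneClass (G : SimpleGraph V) (P : Set (Set V)) (v : V) : Prop :=
  ∀ C ∈ P, ∀ D ∈ P, (∃ x ∈ C, G.Adj v x) → (∃ y ∈ D, G.Adj v y) → C = D

/-- The induced subgraph `G[X]`, viewed as a graph on the same vertex set
(only edges with both endpoints in `X` are kept). -/
def inducedOn (G : SimpleGraph V) (X : Set V) : SimpleGraph V where
  Adj a b := G.Adj a b ∧ a ∈ X ∧ b ∈ X
  symm := by constructor; rintro a b ⟨h, ha, hb⟩; exact ⟨h.symm, hb, ha⟩
  loopless := by constructor; rintro a ⟨h, _⟩; exact G.irrefl h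

/-- The set of edges of `G` with both endpoints in `X`, i.e. the edges of `G[X]`. -/
def edgesWithin (G : SimpleGraph V) (X : Set V) : Set (Sym2 V) :=
  (inducedOn G X).edgeSet

/-- `(G,k)` is a yes-instance of Prison-Free Edge Deletion. -/
def DeletionYes (G : SimpleGraph V) (k : ℕ) : Prop :=
  ∃ A : Set (Sym2 V), A ⊆ G.edgeSet ∧ A.Finite ∧ A.ncard ≤ k ∧
    PrisonFree (G.deleteEdges A)

/-- `P` is a strict supergraph of a prison in `G`: a 5-vertex set whose induced
subgraph is `K₅` or `K₅` minus one edge (at most one non-adjacent pair). -/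
def StrictSupPrison (G : SimpleGraph V) (P : Set V) : Prop :=
  P.ncard = 5 ∧ ∃ u v : V, ∀ x ∈ P, ∀ y ∈ P, x ≠ y → ¬ G.Adj x y →
    (x = u ∧ y = v) ∨ (x = v ∧ y = u)

/-- `P` is a supergraph of a prison in `G`: a 5-vertex set whose induced subgraph
contains a prison on `P` as a spanning subgraph, i.e. all non-adjacent pairs in `P`
are among two pairs sharing a common vertex. -/
def SupPrison (G : SimpleGraph V) (P : Set V) : Prop :=
  P.ncard = 5 ∧ ∃ w u v : V, ∀ x ∈ P, ∀ y ∈ P, x ≠ y → ¬ G.Adj x y →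
    (({x, y} : Set V) = {w, u} ∨ ({x, y} : Set V) = {w, v})

/-- Hypothesis (H1): every edge of `G` that does not have both endpoints in `S`
is contained in a strict supergraph of a prison in `G`. -/
def H1 (G : SimpleGraph V) (S : Set V) : Prop :=
  ∀ u v : V, G.Adj u v → ¬(u ∈ S ∧ v ∈ S) →
    ∃ P, StrictSupPrison G P ∧ u ∈ P ∧ v ∈ P

/-- Hypothesis (H2): every 5-vertex set inducing a prison in `G` contains at least
two edges with both endpoints in `S`. -/
def H2 (G : SimpleGraph V) (S : Set V) : Prop :=
  ∀ P, InducesPrison G P →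
    ∃ e₁ e₂ : Sym2 V, e₁ ≠ e₂ ∧ e₁ ∈ edgesWithin G (P ∩ S) ∧ e₂ ∈ edgesWithin G (P ∩ S)

/-- `B`: the edges of `G−S` lying in no triangle of `G−S`. -/
def BSet (G : SimpleGraph V) (S : Set V) : Set (Sym2 V) :=
  {e ∈ edgesWithin G Sᶜ | ¬ ∃ w ∈ Sᶜ, ∀ x ∈ e, G.Adj w x}

/-- `B_e` for the edge `e = ab` of `G[S]`: the edges of `B` both of whose endpoints
are adjacent in `G` to both `a` and `b`. -/
def BOf (G : SimpleGraph V) (S : Set V) (a b : V) : Set (Sym2 V) :=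
  {f ∈ BSet G S | ∀ x ∈ f, G.Adj x a ∧ G.Adj x b}

/-- `V(B_e)`: the set of endpoints of the edges of `B_e`. -/
def BVerts (G : SimpleGraph V) (S : Set V) (a b : V) : Set V :=
  {x | ∃ f ∈ BOf G S a b, x ∈ f}

/-- The graph `G ∪ A` obtained by adding the pairs in `A` as edges. -/
def addEdges (G : SimpleGraph V) (A : Set (Sym2 V)) : SimpleGraph V :=
  G ⊔ SimpleGraph.fromEdgeSet A

/-- `A` is a prison-free completion set for `G`: a set of non-edges (unordered
pairs of distinct vertices not adjacent in `G`) whose addition makes `G` prison-free. -/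
def CompletionSet (G : SimpleGraph V) (A : Set (Sym2 V)) : Prop :=
  (∀ e ∈ A, ¬ e.IsDiag) ∧ (∀ e ∈ A, e ∉ G.edgeSet) ∧ PrisonFree (addEdges G A)

/-- `A` is a minimal prison-free completion set for `G`. -/
def MinCompletionSet (G : SimpleGraph V) (A : Set (Sym2 V)) : Prop :=
  CompletionSet G A ∧ ∀ A' ⊂ A, ¬ CompletionSet G A'

/-- `A` is a solution to the instance `(G,k)` of Prison-Free Edge Completion:
a prison-free completion set of size at most `k`. -/
def Solution (G : SimpleGraph V) (k : ℕ) (A : Set (Sym2 V)) : Prop :=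
  CompletionSet G A ∧ A.Finite ∧ A.ncard ≤ k

/-- `A` is a minimal solution to `(G,k)`: a solution no proper subset of which is a
prison-free completion set. -/
def MinSolution (G : SimpleGraph V) (k : ℕ) (A : Set (Sym2 V)) : Prop :=
  Solution G k A ∧ ∀ A' ⊂ A, ¬ CompletionSet G A'

/-- `K` is a set of 4 vertices inducing a complete graph `K₄` in `G`. -/
def IsK4 (G : SimpleGraph V) (K : Set V) : Prop :=
  K.ncard = 4 ∧ ∀ u ∈ K, ∀ v ∈ K, u ≠ v → G.Adj u v

/-- The modulator property of the set `S` (output of the sunflower-based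
Lemma): for every prison `P` in `G` and every edge set `A ⊆ E(G)` with `|A| ≤ k`,
if deleting `A` from `G[S]` yields a prison-free graph then `A` contains an edge
of `G[P]`. -/
def GoodModulator (G : SimpleGraph V) (k : ℕ) (S : Set V) : Prop :=
  ∀ P : Set V, InducesPrison G P →
    ∀ A : Set (Sym2 V), A ⊆ G.edgeSet → A.Finite → A.ncard ≤ k →
      PrisonFree ((inducedOn G S).deleteEdges A) →
      ∃ e ∈ A, e ∈ edgesWithin G P

/-- Hypothesis (H3): for every `F' ∈ cmd₃(G−S)` and every inclusion-wise maximal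
set `F ⊇ F'` such that `G[F]` is complete multipartite, some vertex outside `F`
has neighbours in at least two classes of `F`. -/
def H3 (G : SimpleGraph V) (S : Set V) : Prop :=
  ∀ F', Cmd G Sᶜ 3 F' → ∀ F : Set V, F' ⊆ F → CMP G F →
    (∀ F'', F ⊆ F'' → CMP G F'' → F'' = F) →
    ∃ v ∉ F, ∃ P, IsCMP G F P ∧
      ∃ C ∈ P, ∃ D ∈ P, C ≠ D ∧ (∃ x ∈ C, G.Adj v x) ∧ ∃ y ∈ D, G.Adj v y

/-- `F` is an inclusion-wise maximal subset of `W` inducing a complete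
multipartite subgraph of `G`. -/
def MaxCMPon (G : SimpleGraph V) (W F : Set V) : Prop :=
  F ⊆ W ∧ CMP G F ∧ ∀ F'', F'' ⊆ W → F ⊆ F'' → CMP G F'' → F'' = F

instance : DecidableRel prison.Adj := fun _ _ => inferInstanceAs (Decidable (_ ∧ _))

lemma prison_exists_adj (a : Fin 5) : ∃ b, prison.Adj a b := by
  revert a; decide

lemma sym2_eq_of_not_prison_adj {a b : Fin 5} (hab : a ≠ b) (h : ¬ prison.Adj a b) :
    s(a, b) = s(4, 2) ∨ s(a, b) = s(4, 3) := by
  revert a b; decide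

def IsPrisonEmbedding (G : SimpleGraph V) (f : Fin 5 ↪ V) : Prop :=
  ∀ a b, G.Adj (f a) (f b) ↔ prison.Adj a b

lemma adj_of_sym2_eq {α : Type*} {G : SimpleGraph V} {f : α → V} {a b c d : α}
    (hab : G.Adj (f a) (f b)) (h : s(a, b) = s(c, d)) : G.Adj (f c) (f d) := by
  rcases Sym2.eq_iff.1 h with ⟨rfl, rfl⟩ | ⟨rfl, rfl⟩
  exacts [hab, hab.symm]

section PrisonEmbedding

variable {G H K : SimpleGraph V} {f : Fin 5 ↪ V}

lemma prisonFree_iff : PrisonFree G ↔ ∀ f, ¬ IsPrisonEmbedding G f := by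
  simp only [PrisonFree, InducesPrison, IsPrisonEmbedding]
  exact ⟨fun h f hf => h ⟨_, f, rfl, hf⟩, fun h ⟨_, f, _, hf⟩ => h f hf⟩

lemma IsPrisonEmbedding.congr (hGH : ∀ a b, G.Adj (f a) (f b) ↔ H.Adj (f a) (f b))
    (hf : IsPrisonEmbedding G f) : IsPrisonEmbedding H f :=
  fun a b => (hGH a b).symm.trans (hf a b)

lemma IsPrisonEmbedding.of_le_of_le (hHK : H ≤ K) (hKG : K ≤ G)
    (hH : IsPrisonEmbedding H f) (hG : IsPrisonEmbedding G f) : IsPrisonEmbedding K f :=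
  fun a b => ⟨fun h => (hG a b).1 (hKG h), fun h => hHK ((hH a b).2 h)⟩

lemma IsPrisonEmbedding.notMem_of_deleteEdges {A : Set (Sym2 V)} {e : Sym2 V}
    (hG : IsPrisonEmbedding G f) (hGA : IsPrisonEmbedding (G.deleteEdges A) f)
    (he : e ∈ edgesWithin G (Set.range f)) : e ∉ A := by
  induction e using Sym2.ind with
  | _ x y =>
    obtain ⟨hxy, ⟨a, rfl⟩, ⟨b, rfl⟩⟩ := he
    exact ((SimpleGraph.deleteEdges_adj).1 ((hGA a b).2 ((hG a b).1 hxy))).2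

lemma IsPrisonEmbedding.mem_of_le_inducedOn {S : Set V} (hHG : H ≤ inducedOn G S)
    (hf : IsPrisonEmbedding H f) (a : Fin 5) : f a ∈ S :=
  have ⟨b, hab⟩ := prison_exists_adj a
  (hHG ((hf a b).2 hab)).2.1

/-- Here `{c, d} = {2, 3}`: once `G` adds the missing edge `f 4 f c` of a prison of `H ≤ G`,
at most `f 4 f d` can still be missing. -/
lemma strictSupPrison_of_adj {c d : Fin 5}
    (hcd : ∀ {a b : Fin 5}, a ≠ b → ¬ prison.Adj a b →
      s(a, b) = s(4, c) ∨ s(a, b) = s(4, d))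
    (hHG : H ≤ G) (hf : IsPrisonEmbedding H f) (hc : G.Adj (f 4) (f c)) :
    StrictSupPrison G (Set.range f) := by
  refine ⟨by simp [Set.ncard_range_of_injective f.injective], f 4, f d, ?_⟩
  rintro _ ⟨a, rfl⟩ _ ⟨b, rfl⟩ hne hnadj
  have hab : a ≠ b := fun h => hne (congrArg f h)
  rcases hcd hab fun hp => hnadj (hHG ((hf a b).2 hp)) with h | h
  · exact absurd (adj_of_sym2_eq hc h.symm) hnadj
  · rcases Sym2.eq_iff.1 h with ⟨rfl, rfl⟩ | ⟨rfl, rfl⟩ <;> simp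

/-- The only edges `G` can add to a prison of `H ≤ G` are `f 4 f 2` and `f 4 f 3`, and adding
either one already yields a strict supergraph of a prison. -/
lemma IsPrisonEmbedding.of_le (hHG : H ≤ G) (hf : IsPrisonEmbedding H f)
    (hns : ¬ StrictSupPrison G (Set.range f)) : IsPrisonEmbedding G f := by
  refine fun a b => ⟨fun hG => ?_, fun hp => hHG ((hf a b).2 hp)⟩
  by_contra hp
  have hab : a ≠ b := fun h => G.ne_of_adj hG (congrArg f h)
  rcases sym2_eq_of_not_prison_adj hab hp with h | h
  · exact hns (strictSupPrison_of_adj sym2_eq_of_not_prison_adj hHG hf (adj_of_sym2_eq hG h))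
  · exact hns (strictSupPrison_of_adj (fun hab hp => (sym2_eq_of_not_prison_adj hab hp).symm)
      hHG hf (adj_of_sym2_eq hG h))

end PrisonEmbedding

lemma deleteEdges_singleton_adj_iff_of_notMem {G : SimpleGraph V} {X : Set V} {u v x y : V}
    (huv : ¬ (u ∈ X ∧ v ∈ X)) (hx : x ∈ X) (hy : y ∈ X) :
    (G.deleteEdges {s(u, v)}).Adj x y ↔ G.Adj x y := by
  rw [SimpleGraph.deleteEdges_adj, Set.mem_singleton_iff, Sym2.eq_iff]
  refine and_iff_left ?_
  rintro (⟨rfl, rfl⟩ | ⟨rfl, rfl⟩)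
  exacts [huv ⟨hx, hy⟩, huv ⟨hy, hx⟩]

lemma isPrisonEmbedding_deleteEdges_singleton_iff {G : SimpleGraph V} {f : Fin 5 ↪ V} {u v : V}
    (huv : ¬ (u ∈ Set.range f ∧ v ∈ Set.range f)) :
    IsPrisonEmbedding (G.deleteEdges {s(u, v)}) f ↔ IsPrisonEmbedding G f :=
  forall₂_congr fun a b =>
    by rw [deleteEdges_singleton_adj_iff_of_notMem huv ⟨a, rfl⟩ ⟨b, rfl⟩]

lemma IsPrisonEmbedding.of_deleteEdges_singleton {G G' : SimpleGraph V} {f : Fin 5 ↪ V}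
    {u v : V} (hno : ¬ ∃ P : Set V, StrictSupPrison G P ∧ u ∈ P ∧ v ∈ P)
    (hG'G : G' ≤ G)
    (hf : IsPrisonEmbedding (G'.deleteEdges {s(u, v)}) f) : IsPrisonEmbedding G' f := by
  by_cases huv : u ∈ Set.range f ∧ v ∈ Set.range f
  · have hfG := hf.of_le ((SimpleGraph.deleteEdges_le _).trans hG'G)
      fun hs => hno ⟨_, hs, huv⟩
    exact hf.of_le_of_le (SimpleGraph.deleteEdges_le _) hG'G hfG
  · exact (isPrisonEmbedding_deleteEdges_singleton_iff huv).1 hf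

/-- A prison of `G[S] - A` lies inside `S`, where `G` and `G - uv` agree. -/
lemma prisonFree_inducedOn_deleteEdges {G : SimpleGraph V} {S : Set V} {u v : V}
    (huv : ¬ (u ∈ S ∧ v ∈ S)) {A : Set (Sym2 V)}
    (h : PrisonFree ((G.deleteEdges {s(u, v)}).deleteEdges A)) :
    PrisonFree ((inducedOn G S).deleteEdges A) := by
  rw [prisonFree_iff] at h ⊢
  intro f hf
  have hS := hf.mem_of_le_inducedOn (SimpleGraph.deleteEdges_le _)
  refine h f (hf.congr fun a b => ?_)
  rw [SimpleGraph.deleteEdges_adj, SimpleGraph.deleteEdges_adj,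
    deleteEdges_singleton_adj_iff_of_notMem huv (hS a) (hS b)]
  simp [inducedOn, hS a, hS b]

theorem rule_notSuperEdge_safe_general {V : Type*} (G : SimpleGraph V)
    (k : ℕ) (S : Set V) (hS : GoodModulator G k S)
    (u v : V) (hnotS : ¬ (u ∈ S ∧ v ∈ S))
    (hno : ¬ ∃ P : Set V, StrictSupPrison G P ∧ u ∈ P ∧ v ∈ P) :
    DeletionYes G k ↔ DeletionYes (G.deleteEdges {s(u, v)}) k := by
  constructor
  · rintro ⟨A, hAG, hAfin, hAcard, hAfree⟩
    refine ⟨A \ {s(u, v)},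
      SimpleGraph.edgeSet_deleteEdges _ ▸ Set.sdiff_subset_sdiff_left hAG, hAfin.sdiff,
      (Set.ncard_le_ncard Set.sdiff_subset hAfin).trans hAcard, ?_⟩
    rw [SimpleGraph.deleteEdges_deleteEdges, Set.union_sdiff_self, Set.union_comm,
      ← SimpleGraph.deleteEdges_deleteEdges, prisonFree_iff]
    rw [prisonFree_iff] at hAfree
    exact fun f hf => hAfree f (hf.of_deleteEdges_singleton hno (SimpleGraph.deleteEdges_le _))
  · rintro ⟨A, hAG, hAfin, hAcard, hAfree⟩
    have hAG' : A ⊆ G.edgeSet :=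
      hAG.trans (SimpleGraph.edgeSet_mono (SimpleGraph.deleteEdges_le _))
    refine ⟨A, hAG', hAfin, hAcard, ?_⟩
    rw [prisonFree_iff]
    intro f hf
    by_cases huv : u ∈ Set.range f ∧ v ∈ Set.range f
    · have hfG := hf.of_le (SimpleGraph.deleteEdges_le _) fun hs => hno ⟨_, hs, huv⟩
      obtain ⟨e, heA, heP⟩ := hS _ ⟨f, rfl, hfG⟩ A hAG' hAfin hAcard
        (prisonFree_inducedOn_deleteEdges hnotS hAfree)
      exact hfG.notMem_of_deleteEdges hf heP heA
    · rw [SimpleGraph.deleteEdges_deleteEdges, Set.union_comm,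
        ← SimpleGraph.deleteEdges_deleteEdges, prisonFree_iff] at hAfree
      exact hAfree f ((isPrisonEmbedding_deleteEdges_singleton_iff huv).2 hf)

/-- Safeness of Reduction Rule 1: if `S` is a good modulator and
`uv` is an edge of `G` not having both endpoints in `S` and contained in no strict
supergraph of a prison, then `(G,k)` and `(G − uv, k)` are equivalent instances of
Prison-Free Edge Deletion. -/
theorem rule_notSuperEdge_safe {V : Type*} [Fintype V] (G : SimpleGraph V)
    (k : ℕ) (S : Set V) (hS : GoodModulator G k S)
    (u v : V) (huv : G.Adj u v) (hnotS : ¬ (u ∈ S ∧ v ∈ S))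
    (hno : ¬ ∃ P : Set V, StrictSupPrison G P ∧ u ∈ P ∧ v ∈ P) :
    DeletionYes G k ↔ DeletionYes (G.deleteEdges {s(u, v)}) k :=
  rule_notSuperEdge_safe_general G k S hS u v hnotS hno

end PrisonFreePaper
end

section
/- Let G be a graph and S⊆V(G) a set satisfying (H1) and (H2). Then for every F ∈ cmd_3(G−S) and every vertex x ∈ (V(G)∖S)∖F, the neighborhood N_G(x) intersects at most one class of F. -/
namespace PrisonFreePaper

variable {V : Type*}

/-!
Suppose `x` has neighbours in two classes `C ≠ D` of `F`. All of `F ∪ {x}` lies outside `S`,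
and by (H2) no induced prison has three vertices outside `S`. If a class `M` contains a neighbour
`a` and a non-neighbour `c` of `x`, take a neighbour `b` of `x` in another class. Either some
non-neighbour `d` of `x` lies outside `M ∪ D`, and then `a b c d` is a diamond: (H1) applied to the
edge `xa` yields a common neighbour of the triangle `xab`, and however it attaches to `c` and `d`
it creates a prison; or a third class lies inside `N(x)` and already gives a prison. So each class
lies inside or outside `N(x)`, and non-neighbours in two classes would form a prison with `x` and
its neighbours in `C` and `D`. The non-neighbours of `x` in `F` thus form at most one class, and
`x` can be added to that class, or as a new class, contradicting the maximality of `F`.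
-/

theorem exists_embedding_fin_three {α : Type*} {s : Set α} {a b c : α} (ha : a ∈ s) (hb : b ∈ s)
    (hc : c ∈ s) (hab : a ≠ b) (hac : a ≠ c) (hbc : b ≠ c) : ∃ f : Fin 3 ↪ α, ∀ i, f i ∈ s := by
  refine ⟨⟨![a, b, c], ?_⟩, ?_⟩
  · intro i j hij
    fin_cases i <;> fin_cases j <;> simp_all [eq_comm]
  · intro i
    fin_cases i <;> assumption

section IsCMP

variable {G : SimpleGraph V} {F : Set V} {P : Set (Set V)} {K L : Set V} {a b x : V}

theorem IsCMP.mem_of_mem (hP : IsCMP G F P) (hK : K ∈ P) (ha : a ∈ K) : a ∈ F :=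
  (hP.1 K hK).2 ha

theorem IsCMP.exists_mem (hP : IsCMP G F P) (ha : a ∈ F) : ∃ K ∈ P, a ∈ K := by
  rw [← hP.2.1] at ha
  exact ha

theorem IsCMP.eq_of_mem (hP : IsCMP G F P) (hK : K ∈ P) (hL : L ∈ P) (haK : a ∈ K)
    (haL : a ∈ L) : K = L := by
  by_contra hKL
  exact Set.disjoint_left.mp (hP.2.2.1 K hK L hL hKL) haK haL

theorem IsCMP.adj_iff_ne (hP : IsCMP G F P) (hK : K ∈ P) (hL : L ∈ P) (ha : a ∈ K)
    (hb : b ∈ L) : G.Adj a b ↔ K ≠ L := by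
  rw [hP.2.2.2 a (hP.mem_of_mem hK ha) b (hP.mem_of_mem hL hb)]
  constructor
  · rintro h rfl
    exact h ⟨K, hK, ha, hb⟩
  · rintro hKL ⟨M, hM, haM, hbM⟩
    exact hKL ((hP.eq_of_mem hK hM ha haM).trans (hP.eq_of_mem hL hM hb hbM).symm)

theorem IsCMP.eq_setOf (hP : IsCMP G F P) (hK : K ∈ P) (ha : a ∈ K) :
    K = {b ∈ F | b = a ∨ ¬G.Adj a b} := by
  ext b
  constructor
  · intro hb
    exact ⟨hP.mem_of_mem hK hb, or_iff_not_imp_left.2 fun _ => by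
      simpa using (hP.adj_iff_ne hK hK ha hb).not⟩
  · rintro ⟨hbF, rfl | hab⟩
    · exact ha
    · obtain ⟨L, hL, hbL⟩ := hP.exists_mem hbF
      have hKL : K = L := by simpa [hP.adj_iff_ne hK hL ha hbL] using hab
      exact hKL ▸ hbL

theorem IsCMP.subset (hP : IsCMP G F P) {P' : Set (Set V)} (hP' : IsCMP G F P') : P ⊆ P' := by
  intro K hK
  obtain ⟨a, ha⟩ := (hP.1 K hK).1
  obtain ⟨L, hL, haL⟩ := hP'.exists_mem (hP.mem_of_mem hK ha)
  rwa [hP.eq_setOf hK ha, ← hP'.eq_setOf hL haL]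

theorem IsCMP.exists_mem_ne_ne (hP : IsCMP G F P) (h3 : CMPAtLeast G F 3) (M D : Set V) :
    ∃ K ∈ P, K ≠ M ∧ K ≠ D := by
  obtain ⟨P₀, hP₀, f, hf⟩ := h3
  by_contra! h
  have hrange : Set.range f ⊆ {M, D} := by
    rintro _ ⟨i, rfl⟩
    by_cases hM : f i = M
    · exact Or.inl hM
    · exact Or.inr (h _ (hP₀.subset hP (hf i)) hM)
  have := Set.ncard_le_ncard hrange
  rw [Set.ncard_range_of_injective f.injective, Nat.card_eq_fintype_card, Fintype.card_fin] at this
  linarith [Set.ncard_insert_le M {D}, Set.ncard_singleton D]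

theorem IsCMP.insert (hP : IsCMP G F P) {E : Set V} (hxF : x ∉ F) (hE : E = ∅ ∨ E ∈ P)
    (hxE : ∀ y ∈ F, G.Adj x y ↔ y ∉ E) :
    IsCMP G (insert x F) (insert (insert x E) (P \ {E})) := by
  have hEF : E ⊆ F := by
    rcases hE with rfl | hE
    · exact Set.empty_subset F
    · exact (hP.1 E hE).2
  have hxK : ∀ K ∈ P, x ∉ K := fun K hK hx => hxF (hP.mem_of_mem hK hx)
  have hsame : ∀ a ∈ F, ∀ b ∈ F,
      (∃ K ∈ P, a ∈ K ∧ b ∈ K) ↔ (a ∈ E ∧ b ∈ E) ∨ ∃ K ∈ P, K ≠ E ∧ a ∈ K ∧ b ∈ K := by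
    intro a ha b hb
    constructor
    · rintro ⟨K, hK, haK, hbK⟩
      by_cases hKE : K = E
      · exact Or.inl (hKE ▸ ⟨haK, hbK⟩)
      · exact Or.inr ⟨K, hK, hKE, haK, hbK⟩
    · rintro (⟨haE, hbE⟩ | ⟨K, hK, -, hab⟩)
      · rcases hE with rfl | hE
        · exact haE.elim
        · exact ⟨E, hE, haE, hbE⟩
      · exact ⟨K, hK, hab⟩
  refine ⟨?_, ?_, ?_, ?_⟩
  · rintro K (rfl | ⟨hK, -⟩)
    · exact ⟨Set.insert_nonempty x E, Set.insert_subset_insert hEF⟩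
    · exact ⟨(hP.1 K hK).1, (hP.1 K hK).2.trans (Set.subset_insert x F)⟩
  · ext y
    simp only [Set.sUnion_insert, Set.mem_union, Set.mem_insert_iff, Set.mem_sUnion,
      Set.mem_sdiff, Set.mem_singleton_iff]
    constructor
    · rintro ((rfl | hyE) | ⟨K, ⟨hK, -⟩, hyK⟩)
      · exact Or.inl rfl
      · exact Or.inr (hEF hyE)
      · exact Or.inr (hP.mem_of_mem hK hyK)
    · rintro (rfl | hyF)
      · exact Or.inl (Or.inl rfl)
      · obtain ⟨K, hK, hyK⟩ := hP.exists_mem hyF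
        by_cases hKE : K = E
        · exact Or.inl (Or.inr (hKE ▸ hyK))
        · exact Or.inr ⟨K, ⟨hK, hKE⟩, hyK⟩
  · rintro K (rfl | ⟨hK, hKE⟩) L (rfl | ⟨hL, hLE⟩) hKL
    · exact absurd rfl hKL
    · exact Set.disjoint_insert_left.2 ⟨hxK L hL, hE.elim (fun h => h ▸ Set.empty_disjoint L)
        fun hE => hP.2.2.1 E hE L hL (Ne.symm hLE)⟩
    · exact Set.disjoint_insert_right.2 ⟨hxK K hK, hE.elim (fun h => h ▸ Set.disjoint_empty K)
        fun hE => hP.2.2.1 K hK E hE hKE⟩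
    · exact hP.2.2.1 K hK L hL hKL
  · have hne : ∀ a ∈ F, a ≠ x := fun a ha h => hxF (h ▸ ha)
    rintro a (rfl | ha) b (rfl | hb)
    · simp
    · simpa [hxE b hb, hne b hb] using fun _ K hK _ hxK' => (hxK K hK hxK').elim
    · simpa [(hxE a ha).symm, hne a ha, G.adj_comm a] using
        fun _ K hK _ _ hxK' => (hxK K hK hxK').elim
    · simp [hP.2.2.2 a ha b hb, hsame a ha b hb, hne a ha, hne b hb]

theorem IsCMP.exists_adj_iff_notMem (hP : IsCMP G F P)
    (hconst : ∀ M ∈ P, ∀ a ∈ M, ∀ c ∈ M, G.Adj x a → G.Adj x c)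
    (hsame : ∀ w ∈ F, ∀ z ∈ F, ¬G.Adj x w → ¬G.Adj x z → ∃ K ∈ P, w ∈ K ∧ z ∈ K) :
    ∃ E, (E = ∅ ∨ E ∈ P) ∧ ∀ y ∈ F, G.Adj x y ↔ y ∉ E := by
  by_cases h : ∃ w ∈ F, ¬G.Adj x w
  · obtain ⟨w, hw, hxw⟩ := h
    obtain ⟨E, hE, hwE⟩ := hP.exists_mem hw
    refine ⟨E, Or.inr hE, fun y hy => ⟨fun hxy hyE => hxw (hconst E hE y hyE w hwE hxy), ?_⟩⟩
    intro hyE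
    by_contra hxy
    obtain ⟨K, hK, hwK, hyK⟩ := hsame w hw y hy hxw hxy
    exact hyE (hP.eq_of_mem hK hE hwK hwE ▸ hyK)
  · push Not at h
    exact ⟨∅, Or.inl rfl, fun y hy => iff_of_true (h y hy) (Set.notMem_empty y)⟩

theorem Cmd.mem_of_cmpAtLeast_insert {W : Set V} {p : ℕ} (hF : Cmd G W p F) (hx : x ∈ W)
    (h : CMPAtLeast G (insert x F) p) : x ∈ F := by
  rw [← hF.2.2 _ (Set.insert_subset hx hF.1) (Set.subset_insert x F) h]
  exact Set.mem_insert x F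

end IsCMP

section Prison

variable {G : SimpleGraph V} {S P : Set V}

theorem inducesPrison_of_adj {v₀ v₁ v₂ v₃ v₄ : V} (h₀₁ : G.Adj v₀ v₁) (h₀₂ : G.Adj v₀ v₂)
    (h₀₃ : G.Adj v₀ v₃) (h₁₂ : G.Adj v₁ v₂) (h₁₃ : G.Adj v₁ v₃) (h₂₃ : G.Adj v₂ v₃)
    (h₄₀ : G.Adj v₄ v₀) (h₄₁ : G.Adj v₄ v₁) (h₄₂ : ¬G.Adj v₄ v₂) (h₄₃ : ¬G.Adj v₄ v₃)
    (hne₂ : v₄ ≠ v₂) (hne₃ : v₄ ≠ v₃) :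
    InducesPrison G {v₀, v₁, v₂, v₃, v₄} := by
  have := h₀₁.ne; have := h₀₂.ne; have := h₀₃.ne; have := h₁₂.ne; have := h₁₃.ne
  have := h₂₃.ne; have := h₄₀.ne; have := h₄₁.ne
  refine ⟨⟨![v₀, v₁, v₂, v₃, v₄], fun i j hij => ?_⟩, ?_, fun i j => ?_⟩
  · fin_cases i <;> fin_cases j <;> simp_all [eq_comm]
  · show Set.range ![v₀, v₁, v₂, v₃, v₄] = _
    simp only [Matrix.range_cons, Matrix.range_empty, Set.union_empty, Set.singleton_union]
  · show G.Adj (![v₀, v₁, v₂, v₃, v₄] i) (![v₀, v₁, v₂, v₃, v₄] j) ↔ _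
    fin_cases i <;> fin_cases j <;> simp_all [prison, G.adj_comm]

theorem InducesPrison.ncard_eq (hP : InducesPrison G P) : P.ncard = 5 := by
  obtain ⟨f, rfl, -⟩ := hP
  simp [Set.ncard_range_of_injective f.injective]

theorem three_le_ncard_of_ne {X : Set V} {e₁ e₂ : Sym2 V} (hX : X.Finite) (hne : e₁ ≠ e₂)
    (h₁ : e₁ ∈ edgesWithin G X) (h₂ : e₂ ∈ edgesWithin G X) : 3 ≤ X.ncard := by
  induction e₁ using Sym2.ind with | _ p q =>
  induction e₂ using Sym2.ind with | _ p' q' =>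
  obtain ⟨hpq, hp, hq⟩ := h₁
  obtain ⟨hpq', hp', hq'⟩ := h₂
  obtain ⟨r, hr, hrp, hrq⟩ : ∃ r ∈ X, r ≠ p ∧ r ≠ q := by
    by_contra! h
    have := hpq.ne; have := hpq'.ne
    have := h p' hp'; have := h q' hq'
    grind [Sym2.eq_iff]
  calc 3 = ({r, p, q} : Set V).ncard := (Set.ncard_eq_three.2 ⟨r, p, q, hrp, hrq, hpq.ne, rfl⟩).symm
    _ ≤ X.ncard := Set.ncard_le_ncard (by simp [Set.insert_subset_iff, *]) hX

theorem H2.ncard_sdiff_le_two (h2 : H2 G S) (hP : InducesPrison G P) : (P \ S).ncard ≤ 2 := by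
  have hfin : P.Finite := Set.finite_of_ncard_pos (by rw [hP.ncard_eq]; norm_num)
  obtain ⟨e₁, e₂, hne, h₁, h₂⟩ := h2 P hP
  have := three_le_ncard_of_ne (hfin.inter_of_left S) hne h₁ h₂
  have := Set.ncard_inter_add_ncard_sdiff_eq_ncard P S hfin
  rw [hP.ncard_eq] at this
  omega

theorem H2.false_of_inducesPrison (h2 : H2 G S) (hP : InducesPrison G P) {a b c : V}
    (hP' : {a, b, c} ⊆ P) (hab : a ≠ b) (hac : a ≠ c) (hbc : b ≠ c) (ha : a ∉ S) (hb : b ∉ S)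
    (hc : c ∉ S) : False := by
  have hfin : (P \ S).Finite := Set.finite_of_ncard_pos (by rw [hP.ncard_eq]; norm_num) |>.sdiff
  have := Set.ncard_le_ncard (s := {a, b, c}) (t := P \ S) (by simp_all [Set.insert_subset_iff]) hfin
  rw [Set.ncard_eq_three.2 ⟨a, b, c, hab, hac, hbc, rfl⟩] at this
  have := h2.ncard_sdiff_le_two hP
  omega

theorem StrictSupPrison.exists_adj {Q : Set V} (hQ : StrictSupPrison G Q) {x a : V} (hx : x ∈ Q)
    (ha : a ∈ Q) (hxa : G.Adj x a) :
    ∃ s t, G.Adj x s ∧ G.Adj x t ∧ G.Adj a s ∧ G.Adj a t ∧ G.Adj s t := by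
  obtain ⟨hcard, u, v, huv⟩ := hQ
  -- `r` is the endpoint outside `{x, a}` of the non-edge `uv` of `Q`, if there is one
  obtain ⟨r, hr⟩ : ∃ r, (u = x ∨ u = a → r = v) ∧ (¬(u = x ∨ u = a) → r = u) := by
    by_cases hu : u = x ∨ u = a
    · exact ⟨v, fun _ => rfl, fun h => (h hu).elim⟩
    · exact ⟨u, fun h => (hu h).elim, fun _ => rfl⟩
  have hfin : Q.Finite := Set.finite_of_ncard_pos (by omega)
  have h3 : ({x, a, r} : Set V).ncard ≤ 3 :=
    (Set.ncard_insert_le _ _).trans (Nat.succ_le_succ ((Set.ncard_insert_le _ _).trans (by simp)))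
  have hrest : 1 < (Q \ {x, a, r}).ncard := by
    have := Set.le_ncard_sdiff {x, a, r} Q
    omega
  obtain ⟨s, ⟨hs, hs'⟩, t, ⟨ht, ht'⟩, hst⟩ := (Set.one_lt_ncard hfin.sdiff).1 hrest
  simp only [Set.mem_insert_iff, Set.mem_singleton_iff, not_or] at hs' ht'
  have hadj : ∀ y ∈ Q, ∀ z ∈ Q, y ≠ z → (y = x ∨ y = a ∨ y = s ∨ y = t) →
      (z = x ∨ z = a ∨ z = s ∨ z = t) → G.Adj y z := by
    intro y hy z hz hyz hy' hz'
    by_contra h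
    have := huv y hy z hz hyz h
    have := hxa.ne
    have := hxa.symm
    grind
  refine ⟨s, t, ?_, ?_, ?_, ?_, ?_⟩ <;> apply hadj <;> grind

end Prison

section Hypotheses

variable {G : SimpleGraph V} {S : Set V}

theorem H1.exists_adj_of_triangle (h1 : H1 G S) (h2 : H2 G S) {x a b : V} (hx : x ∉ S)
    (ha : a ∉ S) (hb : b ∉ S) (hxa : G.Adj x a) (hxb : G.Adj x b) (hab : G.Adj a b) :
    ∃ s, G.Adj x s ∧ G.Adj a s ∧ G.Adj b s := by
  obtain ⟨Q, hQ, hxQ, haQ⟩ := h1 x a hxa fun h => hx h.1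
  obtain ⟨s, t, hxs, hxt, has, hat, hst⟩ := hQ.exists_adj hxQ haQ hxa
  by_cases hbs : G.Adj b s
  · exact ⟨s, hxs, has, hbs⟩
  by_cases hbt : G.Adj b t
  · exact ⟨t, hxt, hat, hbt⟩
  by_cases hbs' : b = s
  · exact ⟨t, hxt, hat, hbs' ▸ hst⟩
  by_cases hbt' : b = t
  · exact ⟨s, hxs, has, hbt' ▸ hst.symm⟩
  exact (h2.false_of_inducesPrison
    (inducesPrison_of_adj hxa hxs hxt has hat hst hxb.symm hab.symm hbs hbt hbs' hbt')
    (by simp [Set.insert_subset_iff]) hxa.ne hxb.ne hab.ne hx ha hb).elim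

theorem H1.false_of_diamond (h1 : H1 G S) (h2 : H2 G S) {x a b c d : V} (hx : x ∉ S)
    (ha : a ∉ S) (hb : b ∉ S) (hd : d ∉ S) (hxa : G.Adj x a) (hxb : G.Adj x b)
    (hab : G.Adj a b) (had : G.Adj a d) (hbc : G.Adj b c) (hbd : G.Adj b d) (hcd : G.Adj c d)
    (hac : ¬G.Adj a c) (hxc : ¬G.Adj x c) (hxd : ¬G.Adj x d) (hcx : c ≠ x) (hdx : d ≠ x) :
    False := by
  obtain ⟨s, hxs, has, hbs⟩ := h1.exists_adj_of_triangle h2 hx ha hb hxa hxb hab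
  have hca : c ≠ a := fun h => hxc (h ▸ hxa)
  have hcs : c ≠ s := fun h => hxc (h ▸ hxs)
  have hds : d ≠ s := fun h => hxd (h ▸ hxs)
  by_cases hcs' : G.Adj c s
  · exact h2.false_of_inducesPrison
      (inducesPrison_of_adj hbs hxb.symm hab.symm hxs.symm has.symm hxa hbc.symm hcs'
        (mt G.adj_symm hxc) (mt G.adj_symm hac) hcx hca)
      (by simp [Set.insert_subset_iff]) hxa.ne hxb.ne hab.ne hx ha hb
  by_cases hds' : G.Adj d s
  · exact h2.false_of_inducesPrison
      (inducesPrison_of_adj hbd hab.symm hbs had.symm hds' has hbc.symm hcd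
        (mt G.adj_symm hac) hcs' hca hcs)
      (by simp [Set.insert_subset_iff]) hbd.ne hab.ne' had.ne' hb hd ha
  · exact h2.false_of_inducesPrison
      (inducesPrison_of_adj hab hxa.symm has hxb.symm hbs hxs had.symm hbd.symm
        (mt G.adj_symm hxd) hds' hdx hds)
      (by simp [Set.insert_subset_iff]) hab.ne hxa.ne' hxb.ne' ha hb hx

end Hypotheses

section Neighbourhood

variable {G : SimpleGraph V} {S F : Set V} {P : Set (Set V)} {x : V}

theorem false_of_mixed_class (h1 : H1 G S) (h2 : H2 G S) (hF : Cmd G Sᶜ 3 F)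
    (hP : IsCMP G F P) (hxS : x ∉ S) (hxF : x ∉ F) {M D : Set V} (hM : M ∈ P) (hD : D ∈ P)
    (hMD : M ≠ D) {a b c : V} (ha : a ∈ M) (hb : b ∈ D) (hc : c ∈ M) (hxa : G.Adj x a)
    (hxb : G.Adj x b) (hxc : ¬G.Adj x c) : False := by
  have hout : ∀ y ∈ F, y ∉ S := fun y hy => hF.1 hy
  have hne : ∀ y ∈ F, y ≠ x := fun y hy h => hxF (h ▸ hy)
  have haF := hP.mem_of_mem hM ha
  have hbF := hP.mem_of_mem hD hb
  have hcF := hP.mem_of_mem hM hc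
  have hab : G.Adj a b := (hP.adj_iff_ne hM hD ha hb).2 hMD
  have hbc : G.Adj b c := (hP.adj_iff_ne hD hM hb hc).2 hMD.symm
  have hac : ¬G.Adj a c := by simp [hP.adj_iff_ne hM hM ha hc]
  by_cases hd : ∃ d ∈ F, ¬G.Adj x d ∧ d ∉ M ∧ d ∉ D
  · obtain ⟨d, hdF, hxd, hdM, hdD⟩ := hd
    obtain ⟨E, hE, hdE⟩ := hP.exists_mem hdF
    have hME : M ≠ E := fun h => hdM (h ▸ hdE)
    have hDE : D ≠ E := fun h => hdD (h ▸ hdE)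
    exact h1.false_of_diamond h2 hxS (hout a haF) (hout b hbF) (hout d hdF) hxa hxb hab
      ((hP.adj_iff_ne hM hE ha hdE).2 hME) hbc ((hP.adj_iff_ne hD hE hb hdE).2 hDE)
      ((hP.adj_iff_ne hM hE hc hdE).2 hME) hac hxc hxd (hne c hcF) (hne d hdF)
  · obtain ⟨K, hK, hKM, hKD⟩ := hP.exists_mem_ne_ne hF.2.1 M D
    obtain ⟨e, he⟩ := (hP.1 K hK).1
    have heF := hP.mem_of_mem hK he
    have hxe : G.Adj x e := by
      by_contra hxe
      exact hd ⟨e, heF, hxe, fun h => hKM (hP.eq_of_mem hK hM he h),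
        fun h => hKD (hP.eq_of_mem hK hD he h)⟩
    have hbe := (hP.adj_iff_ne hD hK hb he).2 hKD.symm
    have hea := (hP.adj_iff_ne hK hM he ha).2 hKM
    have hce := (hP.adj_iff_ne hM hK hc he).2 hKM.symm
    exact h2.false_of_inducesPrison
      (inducesPrison_of_adj hbe hxb.symm hab.symm hxe.symm hea hxa hbc.symm hce
        (mt G.adj_symm hxc) (mt G.adj_symm hac) (hne c hcF) fun h => hxc (h ▸ hxa))
      (by simp [Set.insert_subset_iff]) hbe.ne hxb.ne' hxe.ne' (hout b hbF) (hout e heF) hxS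

theorem exists_mem_of_not_adj (h2 : H2 G S) (hF : F ⊆ Sᶜ) (hP : IsCMP G F P) (hxF : x ∉ F)
    (hconst : ∀ M ∈ P, ∀ a ∈ M, ∀ c ∈ M, G.Adj x a → G.Adj x c) {C D : Set V} (hC : C ∈ P)
    (hD : D ∈ P) (hCD : C ≠ D) {u v : V} (hu : u ∈ C) (hv : v ∈ D) (hxu : G.Adj x u)
    (hxv : G.Adj x v) {w z : V} (hw : w ∈ F) (hz : z ∈ F) (hxw : ¬G.Adj x w)
    (hxz : ¬G.Adj x z) : ∃ K ∈ P, w ∈ K ∧ z ∈ K := by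
  obtain ⟨Ew, hEw, hwE⟩ := hP.exists_mem hw
  obtain ⟨Ez, hEz, hzE⟩ := hP.exists_mem hz
  by_contra h
  have hE : Ew ≠ Ez := fun h' => h ⟨Ew, hEw, hwE, h' ▸ hzE⟩
  have hCw : C ≠ Ew := fun h' => hxw (hconst C hC u hu w (h' ▸ hwE) hxu)
  have hCz : C ≠ Ez := fun h' => hxz (hconst C hC u hu z (h' ▸ hzE) hxu)
  have hDw : D ≠ Ew := fun h' => hxw (hconst D hD v hv w (h' ▸ hwE) hxv)
  have hDz : D ≠ Ez := fun h' => hxz (hconst D hD v hv z (h' ▸ hzE) hxv)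
  have huv := (hP.adj_iff_ne hC hD hu hv).2 hCD
  have huF := hP.mem_of_mem hC hu
  have hvF := hP.mem_of_mem hD hv
  exact h2.false_of_inducesPrison
    (inducesPrison_of_adj huv ((hP.adj_iff_ne hC hEw hu hwE).2 hCw)
      ((hP.adj_iff_ne hC hEz hu hzE).2 hCz) ((hP.adj_iff_ne hD hEw hv hwE).2 hDw)
      ((hP.adj_iff_ne hD hEz hv hzE).2 hDz) ((hP.adj_iff_ne hEw hEz hwE hzE).2 hE)
      hxu hxv hxw hxz (fun h => hxF (h ▸ hw)) fun h => hxF (h ▸ hz))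
    (by simp [Set.insert_subset_iff]) huv.ne ((hP.adj_iff_ne hC hEw hu hwE).2 hCw).ne
    ((hP.adj_iff_ne hD hEw hv hwE).2 hDw).ne (hF huF) (hF hvF) (hF hw)

end Neighbourhood

theorem superprisonfree_general {V : Type*} (G : SimpleGraph V)
    (S : Set V) (h1 : H1 G S) (h2 : H2 G S) :
    ∀ F : Set V, Cmd G Sᶜ 3 F → ∀ x : V, x ∉ S → x ∉ F →
      ∀ P : Set (Set V), IsCMP G F P → MeetsAtMostOneClass G P x := by
  intro F hF x hxS hxF P hP C hC D hD ⟨u, hu, hxu⟩ ⟨v, hv, hxv⟩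
  by_contra hCD
  have hconst : ∀ M ∈ P, ∀ a ∈ M, ∀ c ∈ M, G.Adj x a → G.Adj x c := by
    intro M hM a ha c hc hxa
    by_contra hxc
    by_cases hMC : M = C
    · exact false_of_mixed_class h1 h2 hF hP hxS hxF hM hD (hMC ▸ hCD) ha hv hc hxa hxv hxc
    · exact false_of_mixed_class h1 h2 hF hP hxS hxF hM hC hMC ha hu hc hxa hxu hxc
  obtain ⟨E, hE, hxE⟩ := hP.exists_adj_iff_notMem hconst fun w hw z hz =>
    exists_mem_of_not_adj h2 hF.1 hP hxF hconst hC hD hCD hu hv hxu hxv hw hz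
  have hCE : C ≠ E := fun h => (hxE u (hP.mem_of_mem hC hu)).1 hxu (h ▸ hu)
  have hDE : D ≠ E := fun h => (hxE v (hP.mem_of_mem hD hv)).1 hxv (h ▸ hv)
  have hCx : C ≠ insert x E := fun h => hxF (hP.mem_of_mem hC (h ▸ Set.mem_insert x E))
  have hDx : D ≠ insert x E := fun h => hxF (hP.mem_of_mem hD (h ▸ Set.mem_insert x E))
  exact hxF (hF.mem_of_cmpAtLeast_insert hxS ⟨_, hP.insert hxF hE hxE,
    exists_embedding_fin_three (Set.mem_insert_of_mem _ ⟨hC, hCE⟩)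
      (Set.mem_insert_of_mem _ ⟨hD, hDE⟩) (Set.mem_insert _ _) hCD hCx hDx⟩)

/-- Under (H1) and (H2), for every `F ∈ cmd₃(G−S)` and every
vertex `x ∉ S` with `x ∉ F`, the neighbourhood of `x` in `G` intersects at most
one class of `F`. -/
theorem superprisonfree {V : Type*} [Fintype V] (G : SimpleGraph V)
    (S : Set V) (h1 : H1 G S) (h2 : H2 G S) :
    ∀ F : Set V, Cmd G Sᶜ 3 F → ∀ x : V, x ∉ S → x ∉ F →
      ∀ P : Set (Set V), IsCMP G F P → MeetsAtMostOneClass G P x :=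
  superprisonfree_general G S h1 h2

end PrisonFreePaper
end
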